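/- For the surface X(u,v) = (e^{2u} cos v, e^{2u} sin v, e^{-u} cosh v, e^{-u} sinh v), u > 1, and any normal field n = n₁ + μn₂, the n-principal curvatures (eigenvalues of (g_ij)⁻¹(b_ij^n)) are never equal, since the discriminant of the quadratic equation det((b_ij^n) − λ(g_ij)) = 0 in λ is strictly positive for all μ and all u > 1; hence the surface is not ν-umbilic for any normal field ν, i.e., it is not pseudo-umbilic. -/

import Mathlib

open Real

/-- For the surface with f = e^{2u}, g = e^{-u} (u > 1), for every normal
field n = n₁ + μn₂ the two n-principal curvatures are distinct: the
discriminant of the characteristic equation is positive, and no λ makes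
(b_ij) = λ(g_ij). Hence the surface is not pseudo-umbilic. -/
theorem stmt_18 :
    ∀ u : ℝ, 1 < u → ∀ μ : ℝ,
      (let g11 : ℝ := 4 * Real.exp (4 * u) + Real.exp (-2 * u)
       let g22 : ℝ := Real.exp (4 * u) - Real.exp (-2 * u)
       let b11 : ℝ := -6 * Real.exp u / Real.sqrt g11
       let b22 : ℝ := -Real.exp u / Real.sqrt g11
       let b12 : ℝ := μ * 3 * Real.exp u / Real.sqrt g22
       0 < (b11 * g22 - b22 * g11) ^ 2 + 4 * g11 * g22 * b12 ^ 2 ∧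
       ¬∃ lam : ℝ, b11 = lam * g11 ∧ b12 = 0 ∧ b22 = lam * g22) := by
  intro u hu μ
  simp only
  set g11 : ℝ := 4 * Real.exp (4 * u) + Real.exp (-2 * u) with hg11def
  set g22 : ℝ := Real.exp (4 * u) - Real.exp (-2 * u) with hg22def
  have hg11 : 0 < g11 := by positivity
  have hg22 : 0 < g22 := by
    have : Real.exp (-2 * u) < Real.exp (4 * u) := by
      apply Real.exp_lt_exp.2; nlinarith
    simpa [hg22def] using sub_pos.2 this
  have hs : 0 < Real.sqrt g11 := Real.sqrt_pos.2 hg11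
  set b11 : ℝ := -6 * Real.exp u / Real.sqrt g11 with hb11
  set b22 : ℝ := -Real.exp u / Real.sqrt g11 with hb22
  set b12 : ℝ := μ * 3 * Real.exp u / Real.sqrt g22 with hb12
  have key : b11 * g22 - b22 * g11 ≠ 0 := by
    have hx : b11 * g22 - b22 * g11
        = Real.exp u / Real.sqrt g11 * (7 * Real.exp (-2 * u) - 2 * Real.exp (4 * u)) := by
      have hss : Real.sqrt g11 * Real.sqrt g11 = g11 := Real.mul_self_sqrt hg11.le
      have hdiff : g11 - 6 * g22 = 7 * Real.exp (-2 * u) - 2 * Real.exp (4 * u) := by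
        rw [hg11def, hg22def]; ring
      have hE : Real.exp (-(2 * u)) = Real.exp (-2 * u) := by norm_num
      rw [hb11, hb22]
      rw [← hdiff]; ring
    have h7 : 7 * Real.exp (-2 * u) - 2 * Real.exp (4 * u) < 0 := by
      have h1 : Real.exp (-2 * u) ≤ 1 := by
        apply Real.exp_le_one_iff.2; nlinarith
      have h2 : (6 * u + 1 : ℝ) ≤ Real.exp (6 * u) := by
        have := Real.add_one_le_exp (6 * u); linarith
      have h3 : Real.exp (4 * u) = Real.exp (6 * u) * Real.exp (-2 * u) := by
        rw [← Real.exp_add]; ring_nf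
      have hpos : 0 < Real.exp (-2 * u) := Real.exp_pos _
      nlinarith
    rw [hx]
    have : Real.exp u / Real.sqrt g11 > 0 := by positivity
    exact ne_of_lt (mul_neg_of_pos_of_neg this h7)
  constructor
  · have h1 : 0 < (b11 * g22 - b22 * g11) ^ 2 := by positivity
    have h2 : 0 ≤ 4 * g11 * g22 * b12 ^ 2 := by positivity
    linarith
  · rintro ⟨lam, h1, h2, h3⟩
    apply key
    rw [h1, h3]; ring
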